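/- arXiv:2308.02020 — 3 statements merged into one kernel-verified Lean document; each statement's English description precedes it below -/
import Mathlib

section
/- Let X be a real vector space, T a finite nonempty index set, f : X → ℝ upper semicontinuous on line segments, and for each t ∈ T let h(t,·) : X → ℝ be convex and lower semicontinuous on line segments. Assume there exists x̃ ∈ X with h(t, x̃) < 0 for all t ∈ T, and assume inf{f(x) | h(t,x) ≥ 0 ∀ t ∈ T} > -∞. Then inf{f(x) | h(t,x) > 0 ∀ t ∈ T} = inf{f(x) | h(t,x) ≥ 0 ∀ t ∈ T}. -/
/-!
Let `x` satisfy `h t x ≥ 0` for all `t`, and let `x̃` be the Slater point. Moving from `x`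
slightly away from `x̃`, to `y = x + s • (x̃ - x)` with `s < 0`, puts `x` strictly between
`x̃` and `y`; since each `h t` is convex and `h t x̃ < 0 ≤ h t x`, it keeps increasing past `x`,
so `y` is strictly feasible. Upper semicontinuity of `f` on the line through `x` and `x̃` makes
`f y` as close to `f x` from above as we like, so the strict infimum is at most `f x`.
-/

open Topology

lemma mem_openSegment_add_smul_sub_of_neg {E : Type*} [AddCommGroup E] [Module ℝ E]
    (x z : E) {s : ℝ} (hs : s < 0) : x ∈ openSegment ℝ z (x + s • (z - x)) := by
  have h1s : 0 < 1 - s := by linarith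
  refine ⟨-s / (1 - s), 1 / (1 - s), div_pos (neg_pos.2 hs) h1s, one_div_pos.2 h1s,
    by field_simp; ring, ?_⟩
  match_scalars <;> field_simp <;> ring

lemma ConvexOn.lt_apply_add_smul_sub_of_lt {E : Type*} [AddCommGroup E] [Module ℝ E]
    {g : E → ℝ} (hg : ConvexOn ℝ Set.univ g) {x z : E} (hzx : g z < g x) {s : ℝ} (hs : s < 0) :
    g x < g (x + s • (z - x)) :=
  hg.lt_right_of_left_lt (Set.mem_univ _) (Set.mem_univ _)
    (mem_openSegment_add_smul_sub_of_neg x z hs) hzx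

lemma UpperSemicontinuous.exists_lt_lt {g : ℝ → ℝ} (hg : UpperSemicontinuous g) {a c : ℝ}
    (hac : g a < c) : ∃ s < a, g s < c :=
  let ⟨s, hsc, hsa⟩ :=
    ((hg a c hac).filter_mono nhdsWithin_le_nhds |>.and self_mem_nhdsWithin).exists (f := 𝓝[<] a)
  ⟨s, hsa, hsc⟩

theorem stmt1_general {X : Type*} [AddCommGroup X] [Module ℝ X]
    {T : Type*}
    (f : X → ℝ)
    (hf : ∀ a b : X, UpperSemicontinuous (fun s : ℝ => f (a + s • (b - a))))
    (h : T → X → ℝ)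
    (hconv : ∀ t, ConvexOn ℝ Set.univ (h t))
    (hslater : ∃ xt : X, ∀ t, h t xt < 0) :
    sInf ((fun x => (f x : EReal)) '' {x | ∀ t, 0 < h t x})
      = sInf ((fun x => (f x : EReal)) '' {x | ∀ t, 0 ≤ h t x}) := by
  obtain ⟨xt, hxt⟩ := hslater
  refine le_antisymm (le_sInf ?_) (sInf_le_sInf (Set.image_mono fun x hx t => (hx t).le))
  rintro _ ⟨x, hx, rfl⟩
  refine le_of_forall_gt_imp_ge_of_dense fun c hxc => ?_
  obtain ⟨r, hxr, hrc⟩ := EReal.exists_between_coe_real hxc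
  obtain ⟨s, hs, hsr⟩ :=
    (hf x xt).exists_lt_lt (a := 0) (by simpa using EReal.coe_lt_coe_iff.1 hxr)
  have hy : x + s • (xt - x) ∈ {y | ∀ t, 0 < h t y} := fun t =>
    (hx t).trans_lt ((hconv t).lt_apply_add_smul_sub_of_lt ((hxt t).trans_le (hx t)) hs)
  exact (sInf_le (Set.mem_image_of_mem _ hy)).trans (EReal.coe_lt_coe_iff.2 hsr |>.trans hrc).le

theorem stmt1 {X : Type*} [AddCommGroup X] [Module ℝ X]
    {T : Type*} [Fintype T] [Nonempty T]
    (f : X → ℝ)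
    (hf : ∀ a b : X, UpperSemicontinuous (fun s : ℝ => f (a + s • (b - a))))
    (h : T → X → ℝ)
    (hconv : ∀ t, ConvexOn ℝ Set.univ (h t))
    (hlsc : ∀ t, ∀ a b : X, LowerSemicontinuous (fun s : ℝ => h t (a + s • (b - a))))
    (hslater : ∃ xt : X, ∀ t, h t xt < 0)
    (hbd : ⊥ < sInf ((fun x => (f x : EReal)) '' {x | ∀ t, 0 ≤ h t x})) :
    sInf ((fun x => (f x : EReal)) '' {x | ∀ t, 0 < h t x})
      = sInf ((fun x => (f x : EReal)) '' {x | ∀ t, 0 ≤ h t x}) :=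
  stmt1_general f hf h hconv hslater
end

section
/- Let f : ℝ^n → ℝ ∪ {∞} be proper, lower semicontinuous, convex, and let T : ℝ^n → ℝ^d be linear, D ⊆ ℝ^d closed convex with int D ≠ ∅. Suppose x̃ minimizes f over ℝ^n, T x̃ ∈ int D, f is upper semicontinuous on line segments (e.g. f real-valued continuous), the constraint {x | Tx ∉ int D} is nonempty, and inf{f(x) | Tx ∉ int D} > −∞. With E := (D − Tx̃)° and h(x) := max_{u∈E} ⟨u, Tx − Tx̃⟩ − 1, we have inf{f(x) | Tx ∉ int D} = inf{f(x) | h(x) ≥ 0} = inf{f(x) | h(x) > 0}. -/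
/-!
Write `c = T x̃`. For `v ∉ interior D`, Hahn–Banach gives a functional `φ` with `φ < φ v` on
`interior D`, hence `φ ≤ φ v` on `D ⊆ closure (interior D)`; the Riesz representative of `φ`,
divided by `φ v - φ c > 0`, lies in the polar `E` and pairs to `1` with `v - c`. If instead
`v ∈ interior D`, then `c + t • (v - c) ∈ D` for some `t > 1`, so every `u ∈ E` pairs with `v - c`
to at most `t⁻¹ < 1`. Thus `T x ∉ interior D ↔ h x ≥ 0`.

The support function of `E` is positively homogeneous, so pushing a point `x` with `h x ≥ 0` away
from `x̃` along the ray through both makes `h > 0`; upper semicontinuity of `f` along that ray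
shows that the infimum over `h > 0` is at most `f x`.
-/

open Set Filter Topology Pointwise RealInnerProductSpace

theorem Convex.exists_strongDual_lt_and_le_of_notMem_interior {V : Type*} [TopologicalSpace V]
    [AddCommGroup V] [IsTopologicalAddGroup V] [Module ℝ V] [ContinuousSMul ℝ V] {D : Set V}
    {c v : V} (hD : Convex ℝ D) (hc : c ∈ interior D) (hv : v ∉ interior D) :
    ∃ φ : StrongDual ℝ V, φ c < φ v ∧ ∀ w ∈ D, φ w ≤ φ v := by
  obtain ⟨φ, hφ⟩ := geometric_hahn_banach_open_point hD.interior isOpen_interior hv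
  refine ⟨φ, hφ c hc, fun w hw => ?_⟩
  have hclosure : D ⊆ closure (interior D) := by
    rw [hD.closure_interior_eq_closure_of_nonempty_interior ⟨c, hc⟩]
    exact subset_closure
  exact closure_minimal (fun x hx => (hφ x hx).le) (isClosed_Iic.preimage φ.continuous)
    (hclosure hw)

section Polar

variable {V : Type*} [NormedAddCommGroup V] [InnerProductSpace ℝ V] {D : Set V} {c : V}

/-- The polar `(D - c)°` of `D` with respect to the point `c`. -/
def shiftedPolar (D : Set V) (c : V) : Set V := {u | ∀ v ∈ D, ⟪u, v - c⟫ ≤ 1}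

/-- The support function of `(D - c)°`, so that `h x = polarSupport D (T x̃) (T x - T x̃) - 1`. -/
noncomputable def polarSupport (D : Set V) (c : V) (w : V) : ℝ :=
  sSup ((fun u => ⟪u, w⟫) '' shiftedPolar D c)

theorem zero_mem_shiftedPolar : (0 : V) ∈ shiftedPolar D c := fun v _ => by simp

theorem norm_le_of_mem_shiftedPolar {r : ℝ} (hr : 0 < r) (hball : Metric.ball c r ⊆ D) {u : V}
    (hu : u ∈ shiftedPolar D c) : ‖u‖ ≤ 2 / r := by
  rcases eq_or_ne u 0 with rfl | hu0
  · simp only [norm_zero]; positivity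
  have hun : 0 < ‖u‖ := norm_pos_iff.2 hu0
  -- test `u` against the point of the ball at distance `r / 2` from `c` in the direction of `u`
  have hw : ‖(r / 2) • ‖u‖⁻¹ • u‖ = r / 2 := by
    rw [norm_smul, norm_smul, norm_inv, norm_norm, inv_mul_cancel₀ hun.ne', mul_one,
      Real.norm_of_nonneg (by positivity)]
  have hmem : c + (r / 2) • ‖u‖⁻¹ • u ∈ D :=
    hball (by rw [Metric.mem_ball, dist_eq_norm, add_sub_cancel_left, hw]; linarith)
  have hpair := hu _ hmem
  rw [add_sub_cancel_left, real_inner_smul_right, real_inner_smul_right,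
    real_inner_self_eq_norm_sq, sq, inv_mul_cancel_left₀ hun.ne'] at hpair
  rw [le_div_iff₀ hr]
  linarith

theorem bddAbove_inner_shiftedPolar (hc : c ∈ interior D) (w : V) :
    BddAbove ((fun u => ⟪u, w⟫) '' shiftedPolar D c) := by
  obtain ⟨r, hr, hball⟩ := Metric.mem_nhds_iff.1 (mem_interior_iff_mem_nhds.1 hc)
  refine ⟨2 / r * ‖w‖, ?_⟩
  rintro _ ⟨u, hu, rfl⟩
  calc ⟪u, w⟫ ≤ ‖u‖ * ‖w‖ := real_inner_le_norm u w
    _ ≤ 2 / r * ‖w‖ := by gcongr; exact norm_le_of_mem_shiftedPolar hr hball hu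

theorem polarSupport_smul {t : ℝ} (ht : 0 ≤ t) (w : V) :
    polarSupport D c (t • w) = t * polarSupport D c w := by
  have himage : (fun u => ⟪u, t • w⟫) '' shiftedPolar D c =
      t • (fun u => ⟪u, w⟫) '' shiftedPolar D c := by
    rw [← image_smul, image_image]
    simp only [real_inner_smul_right, smul_eq_mul]
  rw [polarSupport, himage, Real.sSup_smul_of_nonneg ht, smul_eq_mul, polarSupport]

theorem one_le_polarSupport_of_notMem_interior [CompleteSpace V] (hD : Convex ℝ D)
    (hc : c ∈ interior D) {v : V} (hv : v ∉ interior D) : 1 ≤ polarSupport D c (v - c) := by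
  obtain ⟨φ, hφc, hφD⟩ := hD.exists_strongDual_lt_and_le_of_notMem_interior hc hv
  have hgap : 0 < φ v - φ c := sub_pos.2 hφc
  set u : V := (φ v - φ c)⁻¹ • (InnerProductSpace.toDual ℝ V).symm φ
  have hpair : ∀ w, ⟪u, w - c⟫ = (φ w - φ c) / (φ v - φ c) := fun w => by
    rw [real_inner_smul_left, InnerProductSpace.toDual_symm_apply, map_sub, inv_mul_eq_div]
  have hu : u ∈ shiftedPolar D c := fun w hw => by
    rw [hpair, div_le_one hgap]
    linarith [hφD w hw]
  calc (1 : ℝ) = ⟪u, v - c⟫ := by rw [hpair, div_self hgap.ne']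
    _ ≤ polarSupport D c (v - c) :=
      le_csSup (bddAbove_inner_shiftedPolar hc _) (mem_image_of_mem _ hu)

theorem polarSupport_lt_one_of_mem_interior {v : V} (hv : v ∈ interior D) :
    polarSupport D c (v - c) < 1 := by
  have hray : ∀ᶠ t in 𝓝[>] (1 : ℝ), c + t • (v - c) ∈ D := by
    have hcont : Continuous fun t : ℝ => c + t • (v - c) := by fun_prop
    refine nhdsWithin_le_nhds (hcont.tendsto' 1 v (by simp) (mem_interior_iff_mem_nhds.1 hv))
  obtain ⟨t, htD, ht1⟩ := (hray.and self_mem_nhdsWithin).exists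
  have ht0 : 0 < t := one_pos.trans ht1
  calc polarSupport D c (v - c) ≤ t⁻¹ := by
        refine csSup_le ⟨_, mem_image_of_mem _ zero_mem_shiftedPolar⟩ ?_
        rintro _ ⟨u, hu, rfl⟩
        have hpair := hu _ htD
        rw [add_sub_cancel_left, real_inner_smul_right] at hpair
        show ⟪u, v - c⟫ ≤ t⁻¹
        rw [← mul_one t⁻¹, le_inv_mul_iff₀ ht0]
        exact hpair
    _ < 1 := inv_lt_one_of_one_lt₀ ht1

theorem notMem_interior_iff_one_le_polarSupport [CompleteSpace V] (hD : Convex ℝ D)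
    (hc : c ∈ interior D) {v : V} : v ∉ interior D ↔ 1 ≤ polarSupport D c (v - c) :=
  ⟨one_le_polarSupport_of_notMem_interior hD hc, fun h hv =>
    (polarSupport_lt_one_of_mem_interior hv).not_ge h⟩

end Polar

theorem sInf_image_le_of_upperSemicontinuousAt_ray {V α : Type*} [AddCommGroup V] [Module ℝ V]
    [CompleteLinearOrder α] [DenselyOrdered α] {f : V → α} {S : Set V} {x w : V}
    (hf : UpperSemicontinuousAt (fun s : ℝ => f (x + s • w)) 0)
    (hS : ∀ s : ℝ, 0 < s → x + s • w ∈ S) : sInf (f '' S) ≤ f x := by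
  refine le_of_forall_gt_imp_ge_of_dense fun y hy => ?_
  have hnear : ∀ᶠ s in 𝓝[>] (0 : ℝ), f (x + s • w) < y :=
    nhdsWithin_le_nhds (hf y (by simpa using hy))
  obtain ⟨s, hfs, hs⟩ := (hnear.and self_mem_nhdsWithin).exists
  exact (sInf_le (mem_image_of_mem f (hS s hs))).trans hfs.le

theorem stmt16_general {n d : ℕ}
    (f : EuclideanSpace ℝ (Fin n) → EReal)
    (husc : ∀ a b : EuclideanSpace ℝ (Fin n),
      UpperSemicontinuous (fun s : ℝ => f (a + s • (b - a))))
    (T : EuclideanSpace ℝ (Fin n) →ₗ[ℝ] EuclideanSpace ℝ (Fin d))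
    (D : Set (EuclideanSpace ℝ (Fin d)))
    (hDconv : Convex ℝ D)
    (xt : EuclideanSpace ℝ (Fin n))
    (hxt : T xt ∈ interior D)
    (E : Set (EuclideanSpace ℝ (Fin d)))
    (hE : E = {u | ∀ v ∈ D, (inner ℝ u (v - T xt) : ℝ) ≤ 1})
    (h : EuclideanSpace ℝ (Fin n) → ℝ)
    (hh : ∀ x, h x = sSup ((fun u => (inner ℝ u (T x - T xt) : ℝ)) '' E) - 1) :
    sInf (f '' {x | T x ∉ interior D}) = sInf (f '' {x | 0 ≤ h x}) ∧
    sInf (f '' {x | 0 ≤ h x}) = sInf (f '' {x | 0 < h x}) := by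
  replace hh : ∀ x, h x = polarSupport D (T xt) (T x - T xt) - 1 := by subst hE; exact hh
  have hfeasible : {x | T x ∉ interior D} = {x | 0 ≤ h x} := by
    ext x
    simp only [mem_ofPred_eq, hh, sub_nonneg]
    exact notMem_interior_iff_one_le_polarSupport hDconv hxt
  refine ⟨by rw [hfeasible], le_antisymm (sInf_le_sInf (image_mono fun x (hx : 0 < h x) => hx.le)) ?_⟩
  refine le_sInf (forall_mem_image.2 fun x hx => ?_)
  have hray : ∀ s : ℝ, 0 ≤ s → h (x + s • (x - xt)) = (1 + s) * (h x + 1) - 1 := fun s hs => by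
    have hT : T (x + s • (x - xt)) - T xt = (1 + s) • (T x - T xt) := by
      simp only [map_add, map_smul, map_sub]; module
    rw [hh, hh, hT, polarSupport_smul (by linarith)]
    ring
  refine sInf_image_le_of_upperSemicontinuousAt_ray
    (by simpa only [add_sub_cancel_left] using husc x (x + (x - xt)) 0) fun s hs => ?_
  show 0 < h _
  rw [hray s hs.le]
  nlinarith [show (0 : ℝ) ≤ h x from hx]

theorem stmt16 {n d : ℕ}
    (f : EuclideanSpace ℝ (Fin n) → EReal)
    (hproper : ∃ x, f x ≠ ⊤) (hnobot : ∀ x, f x ≠ ⊥)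
    (hlsc : LowerSemicontinuous f)
    (hfconv : ∀ x y : EuclideanSpace ℝ (Fin n), ∀ a b : ℝ, 0 ≤ a → 0 ≤ b → a + b = 1 →
      f (a • x + b • y) ≤ (a : EReal) * f x + (b : EReal) * f y)
    (husc : ∀ a b : EuclideanSpace ℝ (Fin n),
      UpperSemicontinuous (fun s : ℝ => f (a + s • (b - a))))
    (T : EuclideanSpace ℝ (Fin n) →ₗ[ℝ] EuclideanSpace ℝ (Fin d))
    (D : Set (EuclideanSpace ℝ (Fin d))) (hDne : D.Nonempty)
    (hDcl : IsClosed D) (hDconv : Convex ℝ D)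
    (xt : EuclideanSpace ℝ (Fin n)) (hmin : ∀ x, f xt ≤ f x)
    (hxt : T xt ∈ interior D)
    (hfeas : {x | T x ∉ interior D}.Nonempty)
    (hbd : ⊥ < sInf (f '' {x | T x ∉ interior D}))
    (E : Set (EuclideanSpace ℝ (Fin d)))
    (hE : E = {u | ∀ v ∈ D, (inner ℝ u (v - T xt) : ℝ) ≤ 1})
    (h : EuclideanSpace ℝ (Fin n) → ℝ)
    (hh : ∀ x, h x = sSup ((fun u => (inner ℝ u (T x - T xt) : ℝ)) '' E) - 1) :
    sInf (f '' {x | T x ∉ interior D}) = sInf (f '' {x | 0 ≤ h x}) ∧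
    sInf (f '' {x | 0 ≤ h x}) = sInf (f '' {x | 0 < h x}) :=
  stmt16_general f husc T D hDconv xt hxt E hE h hh
end

section
/- Let f : X → ℝ ∪ {∞} be proper on a real vector space X, T finite nonempty, φ : T → X* and c : T → ℝ with the Slater-type condition: ∃ x̄ ∈ dom f with ⟨φ(t), x̄⟩ > c(t) for all t ∈ T. Assume f is upper semicontinuous on line segments and inf{f(x) | ⟨φ(t),x⟩ ≥ c(t) ∀t} > −∞. Then inf{f(x) | ⟨φ(t), x⟩ > c(t) ∀ t ∈ T} = inf{f(x) | ⟨φ(t), x⟩ ≥ c(t) ∀ t ∈ T}. -/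
/-!
Pushing a feasible point `x` of the non-strict system a little towards the Slater point `x̄`
makes every constraint strict, and upper semicontinuity of `f` along the segment `[x, x̄]` at `x`
keeps `f` from jumping up, so the infimum over the strict system is at most `f x`.
-/

open Set Filter Topology

section Segment

variable {X : Type*} [AddCommGroup X] [Module ℝ X]

lemma LinearMap.lt_apply_add_smul_sub {φ : X →ₗ[ℝ] ℝ} {c : ℝ} {x y : X} (hx : c ≤ φ x)
    (hy : c < φ y) {s : ℝ} (hs₀ : 0 < s) (hs₁ : s ≤ 1) : c < φ (x + s • (y - x)) := by
  simp only [map_add, map_smul, map_sub, smul_eq_mul]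
  nlinarith

lemma sInf_image_le_of_upperSemicontinuousAt_segment {α : Type*} [CompleteLinearOrder α]
    {f : X → α} {S : Set X} {x y : X}
    (hf : UpperSemicontinuousAt (fun s : ℝ => f (x + s • (y - x))) 0)
    (hS : ∀ s : ℝ, 0 < s → s ≤ 1 → x + s • (y - x) ∈ S) :
    sInf (f '' S) ≤ f x := by
  refine le_of_not_gt fun hlt => ?_
  have hnear : ∀ᶠ s in 𝓝[>] (0 : ℝ), f (x + s • (y - x)) < sInf (f '' S) :=
    nhdsWithin_le_nhds (hf _ (by simpa using hlt))
  have hsmall : ∀ᶠ s in 𝓝[>] (0 : ℝ), s ∈ Ioc 0 1 := Ioc_mem_nhdsGT one_pos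
  obtain ⟨s, hfs, hs₀, hs₁⟩ := (hnear.and hsmall).exists
  exact (sInf_le (mem_image_of_mem f (hS s hs₀ hs₁))).not_gt hfs

end Segment

theorem stmt19_general {X : Type*} [AddCommGroup X] [Module ℝ X]
    {T : Type*}
    (f : X → EReal)
    (hf : ∀ a b : X, UpperSemicontinuous (fun s : ℝ => f (a + s • (b - a))))
    (φ : T → (X →ₗ[ℝ] ℝ)) (c : T → ℝ)
    (hslater : ∃ xb : X, f xb ≠ ⊤ ∧ ∀ t, c t < φ t xb) :
    sInf (f '' {x | ∀ t, c t < φ t x}) = sInf (f '' {x | ∀ t, c t ≤ φ t x}) := by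
  obtain ⟨xb, -, hxb⟩ := hslater
  refine le_antisymm (le_sInf ?_) (sInf_le_sInf (image_mono fun x hx t => (hx t).le))
  rintro _ ⟨x, hx, rfl⟩
  exact sInf_image_le_of_upperSemicontinuousAt_segment (hf x xb 0)
    fun s hs₀ hs₁ t => (φ t).lt_apply_add_smul_sub (hx t) (hxb t) hs₀ hs₁

theorem stmt19 {X : Type*} [AddCommGroup X] [Module ℝ X]
    {T : Type*} [Fintype T] [Nonempty T]
    (f : X → EReal) (hproper : ∃ x, f x ≠ ⊤) (hnobot : ∀ x, f x ≠ ⊥)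
    (hf : ∀ a b : X, UpperSemicontinuous (fun s : ℝ => f (a + s • (b - a))))
    (φ : T → (X →ₗ[ℝ] ℝ)) (c : T → ℝ)
    (hslater : ∃ xb : X, f xb ≠ ⊤ ∧ ∀ t, c t < φ t xb)
    (hbd : ⊥ < sInf (f '' {x | ∀ t, c t ≤ φ t x})) :
    sInf (f '' {x | ∀ t, c t < φ t x}) = sInf (f '' {x | ∀ t, c t ≤ φ t x}) :=
  stmt19_general f hf φ c hslater
end
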